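/- arXiv:2205.12814 — 2 statements merged into one kernel-verified Lean document; each statement's English description precedes it below -/
import Mathlib

section
/- Two connected skew diagrams θ and θ′ satisfy P(θ) ≅ P(θ′) as posets if and only if θ = θ′ or θ^T = θ′ (as translation classes of skew diagrams). -/
/-- A cell (box) of the plane: `(row, column)`. -/
abbrev Cell : Type := ℤ × ℤ

/-- The transpose of a cell. -/
def transposeCell (c : Cell) : Cell := (c.2, c.1)

/-- Equality of diagrams up to translation. -/
def TranslateEq (S T : Finset Cell) : Prop := ∃ v : Cell, T = S.image (· + v)

/-- A finite set of cells is a skew diagram iff it is order-convex for the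
componentwise order; this characterizes the translates of the sets of boxes
`{(i,j) : λ_i < j ≤ μ_i}` for partitions `λ ⊆ μ`. -/
def IsSkewDiagram (S : Finset Cell) : Prop :=
  ∀ a b c : Cell, a ∈ S → b ∈ S → a ≤ c → c ≤ b → c ∈ S

/-- The diagonal value `j − i` of a cell `(i, j)`. -/
def diagVal (c : Cell) : ℤ := c.2 - c.1

/-- A skew diagram is connected iff no NW-SE anti-diagonal line partitions it into
two nonempty parts, one strictly northeast and one strictly southwest of the line. -/
def SkewConnected (S : Finset Cell) : Prop :=
  ¬ ∃ d : ℤ, (∀ c ∈ S, diagVal c ≠ d) ∧ (∃ c ∈ S, diagVal c < d) ∧ (∃ c ∈ S, d < diagVal c)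

/-!
Covers in a skew diagram are unit steps, and whether two consecutive covers go straight or turn
a corner is visible in the order alone: a corner is exactly a length-two chain whose endpoints are
also joined by a second such chain. Hence an order isomorphism `e` preserves the directions of
two covers sharing a cell either both or neither. The Hasse diagram of a connected skew diagram
is connected, so `e` preserves the direction of every cover or swaps that of every cover, and is
therefore a translation or a transposition followed by a translation.
-/

open SimpleGraph

namespace Cell

def IsStep (u : Cell) : Prop := u = (1, 0) ∨ u = (0, 1)

lemma covBy_iff_isStep_sub {a b : Cell} : a ⋖ b ↔ IsStep (b - a) := by
  obtain ⟨a₁, a₂⟩ := a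
  obtain ⟨b₁, b₂⟩ := b
  simp only [IsStep, Prod.mk_covBy_mk_iff, Order.covBy_iff_add_one_eq, Prod.mk_sub_mk,
    Prod.mk.injEq]
  omega

lemma IsStep.eq_swap_of_ne {u w : Cell} (hu : IsStep u) (hw : IsStep w) (h : w ≠ u) :
    w = u.swap := by
  rcases hu with rfl | rfl <;> rcases hw with rfl | rfl <;> simp_all

lemma IsStep.eq_iff_eq_of_eq_iff_eq {u v u' v' : Cell} (hu : IsStep u) (hv : IsStep v)
    (hu' : IsStep u') (hv' : IsStep v') (h : u' = v' ↔ u = v) : u' = u ↔ v' = v := by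
  rcases hu with rfl | rfl <;> rcases hv with rfl | rfl <;> rcases hu' with rfl | rfl <;>
    rcases hv' with rfl | rfl <;> simp_all

lemma sub_ne_sub_iff_exists_covBy {a b c : Cell} (hab : a ⋖ b) (hbc : b ⋖ c) :
    b - a ≠ c - b ↔ ∃ b', b' ≠ b ∧ a ⋖ b' ∧ b' ⋖ c := by
  simp only [covBy_iff_isStep_sub, IsStep, Ne, Prod.ext_iff, Prod.fst_sub, Prod.snd_sub] at *
  constructor
  · intro h
    exact ⟨a + (c - b), by simp; omega, by simp; omega, by simp; omega⟩
  · rintro ⟨b', hne, h₁, h₂⟩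
    omega

end Cell

lemma Set.OrdConnected.coe_covBy_coe {α : Type*} [PartialOrder α] {s : Set α} (hs : s.OrdConnected)
    {x y : s} : (x : α) ⋖ y ↔ x ⋖ y :=
  Set.OrdConnected.apply_covBy_apply_iff (OrderEmbedding.subtype (· ∈ s)) (by simpa using hs)

lemma SimpleGraph.Preconnected.eq_of_forall_adj {V β : Type*} {G : SimpleGraph V}
    (hG : G.Preconnected) {f : V → β} (hf : ∀ u v, G.Adj u v → f u = f v) (u v : V) :
    f u = f v := by
  obtain ⟨p⟩ := hG u v
  induction p with
  | nil => rfl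
  | cons h _ ih => exact (hf _ _ h).trans ih

lemma reachable_hasse_of_le {α : Type*} [PartialOrder α] [LocallyFiniteOrder α] {x y : α}
    (h : x ≤ y) : (hasse α).Reachable x y := by
  rw [reachable_iff_reflTransGen]
  exact Relation.ReflTransGen.mono (fun _ _ => Or.inl) _ _ (le_iff_reflTransGen_covBy.mp h)

lemma iff_of_covBy_of_hasse_preconnected {α : Type*} [PartialOrder α]
    (hα : (hasse α).Preconnected) {p : α → α → Prop}
    (hp : ∀ ⦃x y x' y'⦄, x ⋖ y → x' ⋖ y' → (x = x' ∨ y = y' ∨ y = x' ∨ x = y') →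
      (p x y ↔ p x' y'))
    {x y x' y' : α} (h : x ⋖ y) (h' : x' ⋖ y') : p x y ↔ p x' y' := by
  suffices key : ∀ c, (hasse α).Reachable x c → ∀ a b, a ⋖ b → (a = c ∨ b = c) →
      (p a b ↔ p x y) from
    (key x' (hα x x') x' y' h' (Or.inl rfl)).symm
  intro c hc
  rw [reachable_iff_reflTransGen] at hc
  induction hc with
  | refl =>
    rintro a b hab (rfl | rfl)
    · exact hp hab h (Or.inl rfl)
    · exact hp hab h (Or.inr (Or.inr (Or.inl rfl)))
  | @tail c d _ hcd ih =>
    rintro a b hab had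
    rcases hcd with hcd | hdc
    · refine (hp hab hcd ?_).trans (ih c d hcd (Or.inl rfl))
      rcases had with rfl | rfl
      exacts [Or.inr (Or.inr (Or.inr rfl)), Or.inr (Or.inl rfl)]
    · refine (hp hab hdc ?_).trans (ih d c hdc (Or.inr rfl))
      rcases had with rfl | rfl
      exacts [Or.inl rfl, Or.inr (Or.inr (Or.inl rfl))]

section OrdConnected

variable {s t : Set Cell}

lemma Set.OrdConnected.isStep_sub_of_covBy (hs : s.OrdConnected) {x y : s} (h : x ⋖ y) :
    Cell.IsStep ((y : Cell) - x) :=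
  Cell.covBy_iff_isStep_sub.mp (hs.coe_covBy_coe.mpr h)

lemma Set.OrdConnected.sub_ne_sub_iff_exists_covBy (hs : s.OrdConnected) {x y z : s}
    (hxy : x ⋖ y) (hyz : y ⋖ z) :
    (y : Cell) - x ≠ z - y ↔ ∃ y', y' ≠ y ∧ x ⋖ y' ∧ y' ⋖ z := by
  rw [Cell.sub_ne_sub_iff_exists_covBy (hs.coe_covBy_coe.mpr hxy) (hs.coe_covBy_coe.mpr hyz)]
  constructor
  · rintro ⟨b, hb, hxb, hbz⟩
    have hbs : b ∈ s := hs.out x.2 z.2 ⟨hxb.le, hbz.le⟩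
    exact ⟨⟨b, hbs⟩, fun h => hb (congrArg Subtype.val h),
      (hs.coe_covBy_coe (y := ⟨b, hbs⟩)).mp hxb, (hs.coe_covBy_coe (x := ⟨b, hbs⟩)).mp hbz⟩
  · rintro ⟨y', hy', hxy', hy'z⟩
    exact ⟨y', Subtype.coe_ne_coe.mpr hy', hs.coe_covBy_coe.mpr hxy', hs.coe_covBy_coe.mpr hy'z⟩

namespace OrderIso

lemma sub_eq_sub_iff_of_covBy_of_covBy (hs : s.OrdConnected) (ht : t.OrdConnected) (e : s ≃o t)
    {x y z : s} (hxy : x ⋖ y) (hyz : y ⋖ z) :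
    (e y : Cell) - e x = e z - e y ↔ (y : Cell) - x = z - y := by
  rw [← not_iff_not, ← ne_eq, ← ne_eq, hs.sub_ne_sub_iff_exists_covBy hxy hyz,
    ht.sub_ne_sub_iff_exists_covBy ((apply_covBy_apply_iff e).mpr hxy)
      ((apply_covBy_apply_iff e).mpr hyz), e.surjective.exists]
  simp only [ne_eq, EmbeddingLike.apply_eq_iff_eq, apply_covBy_apply_iff]

lemma sub_eq_sub_iff_of_covBy_of_adjacent (hs : s.OrdConnected) (ht : t.OrdConnected) (e : s ≃o t)
    {x y x' y' : s} (h : x ⋖ y) (h' : x' ⋖ y')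
    (hshare : x = x' ∨ y = y' ∨ y = x' ∨ x = y') :
    (e y : Cell) - e x = e y' - e x' ↔ (y : Cell) - x = y' - x' := by
  rcases hshare with rfl | rfl | rfl | rfl
  · simp only [sub_left_inj, Subtype.coe_inj, EmbeddingLike.apply_eq_iff_eq]
  · simp only [sub_right_inj, Subtype.coe_inj, EmbeddingLike.apply_eq_iff_eq]
  · exact e.sub_eq_sub_iff_of_covBy_of_covBy hs ht h h'
  · rw [eq_comm, @eq_comm _ ((y : Cell) - x)]
    exact e.sub_eq_sub_iff_of_covBy_of_covBy hs ht h' h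

lemma sub_eq_sub_iff_of_hasse_preconnected (hs : s.OrdConnected) (ht : t.OrdConnected)
    (hconn : (hasse s).Preconnected) (e : s ≃o t) {x y x' y' : s} (h : x ⋖ y) (h' : x' ⋖ y') :
    (e y : Cell) - e x = y - x ↔ (e y' : Cell) - e x' = y' - x' :=
  iff_of_covBy_of_hasse_preconnected hconn (p := fun x y => (e y : Cell) - e x = y - x)
    (fun _ _ _ _ h h' hshare =>
      Cell.IsStep.eq_iff_eq_of_eq_iff_eq (hs.isStep_sub_of_covBy h) (hs.isStep_sub_of_covBy h')
        (ht.isStep_sub_of_covBy ((apply_covBy_apply_iff e).mpr h))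
        (ht.isStep_sub_of_covBy ((apply_covBy_apply_iff e).mpr h'))
        (e.sub_eq_sub_iff_of_covBy_of_adjacent hs ht h h' hshare)) h h'

end OrderIso

end OrdConnected

theorem OrderIso.exists_forall_eq_add_or_forall_eq_swap_add {s t : Set Cell}
    (hs : s.OrdConnected) (ht : t.OrdConnected) (hconn : (hasse s).Preconnected) (e : s ≃o t) :
    ∃ v : Cell, (∀ x : s, (e x : Cell) = x + v) ∨ ∀ x : s, (e x : Cell) = (x : Cell).swap + v := by
  rcases isEmpty_or_nonempty s with hempty | hnonempty
  · exact ⟨0, Or.inl fun x => isEmptyElim x⟩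
  obtain ⟨a⟩ := hnonempty
  have hconst {f : s → Cell} (hf : ∀ x y : s, x ⋖ y → f y - f x = y - x) (x : s) :
      f x - x = f a - a := by
    refine hconn.eq_of_forall_adj (f := fun x => f x - x) (fun x y hxy => ?_) x a
    rcases hxy with hxy | hxy
    exacts [by linear_combination -hf x y hxy, by linear_combination hf y x hxy]
  by_cases hall : ∀ x y : s, x ⋖ y → (e y : Cell) - e x = y - x
  · refine ⟨e a - a, Or.inl fun x => ?_⟩
    rw [← hconst hall x]; abel
  · push Not at hall
    obtain ⟨x₀, y₀, h₀, hne⟩ := hall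
    have hswap (x y : s) (h : x ⋖ y) : (e y : Cell).swap - (e x : Cell).swap = y - x := by
      have hne' : (e y : Cell) - e x ≠ y - x := fun heq =>
        hne ((OrderIso.sub_eq_sub_iff_of_hasse_preconnected hs ht hconn e h₀ h).mpr heq)
      rw [← Prod.swap_sub, Cell.IsStep.eq_swap_of_ne (hs.isStep_sub_of_covBy h)
        (ht.isStep_sub_of_covBy ((apply_covBy_apply_iff e).mpr h)) hne', Prod.swap_swap]
    refine ⟨((e a : Cell).swap - a).swap, Or.inr fun x => ?_⟩
    rw [← hconst (f := fun x => (e x : Cell).swap) hswap x, Prod.swap_sub, Prod.swap_swap]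
    abel

lemma le_or_le_of_natAbs_diagVal_sub_le_one {a b : Cell}
    (h : (diagVal b - diagVal a).natAbs ≤ 1) : a ≤ b ∨ b ≤ a := by
  simp only [diagVal, Prod.le_def] at *
  omega

lemma SkewConnected.exists_diagVal_eq {S : Finset Cell} (hc : SkewConnected S) {a b : Cell}
    (ha : a ∈ S) (hb : b ∈ S) {d : ℤ} (had : diagVal a < d) (hdb : d < diagVal b) :
    ∃ c ∈ S, diagVal c = d := by
  by_contra! h
  exact hc ⟨d, h, ⟨a, ha, had⟩, ⟨b, hb, hdb⟩⟩

lemma IsSkewDiagram.ordConnected {S : Finset Cell} (hS : IsSkewDiagram S) :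
    (S : Set Cell).OrdConnected :=
  ⟨fun a ha b hb _ hc => hS a b _ ha hb hc.1 hc.2⟩

lemma hasse_preconnected_of_skewConnected {S : Finset Cell}
    (hc : SkewConnected S) : (hasse (S : Set Cell)).Preconnected := by
  have hnear (x y : (S : Set Cell)) (h : (diagVal y - diagVal x).natAbs ≤ 1) :
      (hasse _).Reachable x y := by
    rcases le_or_le_of_natAbs_diagVal_sub_le_one h with h | h
    · exact reachable_hasse_of_le (show x ≤ y from h)
    · exact (reachable_hasse_of_le (show y ≤ x from h)).symm
  intro x y
  induction hn : (diagVal y - diagVal x).natAbs using Nat.strong_induction_on generalizing y with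
  | _ n ih =>
  by_cases hn1 : n ≤ 1
  · exact hnear x y (hn ▸ hn1)
  rcases lt_or_gt_of_ne (show diagVal x ≠ diagVal y by omega) with hxy | hxy
  · obtain ⟨c, hcS, hcd⟩ := hc.exists_diagVal_eq x.2 y.2 (d := diagVal y - 1) (by omega) (by omega)
    refine (ih _ ?_ ⟨c, hcS⟩ rfl).trans (hnear ⟨c, hcS⟩ y ?_) <;> simp only <;> omega
  · obtain ⟨c, hcS, hcd⟩ := hc.exists_diagVal_eq y.2 x.2 (d := diagVal y + 1) (by omega) (by omega)
    refine (ih _ ?_ ⟨c, hcS⟩ rfl).trans (hnear ⟨c, hcS⟩ y ?_) <;> simp only <;> omega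

lemma translateEq_image_of_forall_apply_eq {S T : Finset Cell}
    (e : {c // c ∈ S} ≃ {c // c ∈ T}) (g : Cell → Cell) (v : Cell)
    (h : ∀ x, (e x : Cell) = g x + v) : TranslateEq (S.image g) T := by
  refine ⟨v, Finset.ext fun t => ?_⟩
  simp only [Finset.image_image, Finset.mem_image, Function.comp_apply]
  constructor
  · intro ht
    exact ⟨_, (e.symm ⟨t, ht⟩).2, by rw [← h, e.apply_symm_apply]⟩
  · rintro ⟨c, hc, rfl⟩
    rw [← h ⟨c, hc⟩]
    exact (e ⟨c, hc⟩).2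

def OrderIso.finsetImage {α β : Type*} [Preorder α] [Preorder β] [DecidableEq β] (φ : α ≃o β)
    (S : Finset α) : {c // c ∈ S} ≃o {c // c ∈ S.image φ} where
  toEquiv := φ.toEquiv.subtypeEquiv fun a => by simp
  map_rel_iff' := φ.le_iff_le

theorem posetIso_iff_eq_or_transpose_general
    (S T : Finset Cell) (hS : IsSkewDiagram S) (hT : IsSkewDiagram T)
    (hcS : SkewConnected S) :
    Nonempty ({c : Cell // c ∈ S} ≃o {c : Cell // c ∈ T}) ↔
      (TranslateEq S T ∨ TranslateEq (S.image transposeCell) T) := by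
  constructor
  · rintro ⟨e⟩
    obtain ⟨v, h | h⟩ := OrderIso.exists_forall_eq_add_or_forall_eq_swap_add hS.ordConnected
      hT.ordConnected (hasse_preconnected_of_skewConnected hcS) e
    · left
      simpa using translateEq_image_of_forall_apply_eq e.toEquiv id v h
    · exact Or.inr (translateEq_image_of_forall_apply_eq e.toEquiv transposeCell v h)
  · rintro (⟨v, rfl⟩ | ⟨v, rfl⟩)
    · exact ⟨(OrderIso.addRight v).finsetImage S⟩
    · exact ⟨((OrderIso.prodComm : Cell ≃o Cell).finsetImage S).trans
        ((OrderIso.addRight v).finsetImage _)⟩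

/-- for connected skew diagrams θ, θ′, the box posets `P(θ)` and
`P(θ′)` (the componentwise order on the cells, which is the order generated by the
covering relations) are isomorphic iff `θ = θ′` or `θ^T = θ′` as translation
classes of skew diagrams. -/
theorem posetIso_iff_eq_or_transpose
    (S T : Finset Cell) (hS : IsSkewDiagram S) (hT : IsSkewDiagram T)
    (hcS : SkewConnected S) (hcT : SkewConnected T) :
    Nonempty ({c : Cell // c ∈ S} ≃o {c : Cell // c ∈ T}) ↔
      (TranslateEq S T ∨ TranslateEq (S.image transposeCell) T) :=
  posetIso_iff_eq_or_transpose_general S T hS hT hcS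
end

section
/- Let λ = (a_1^{b_1}, …, a_r^{b_r}) with a_1 > … > a_r > 0, b_i > 0, and r ≥ 2, and define λ^i as the partition obtained by removing the hook: λ^i = (a_1^{b_1}, …, a_{i−1}^{b_{i−1}}, a_i^{b_i−1}, (a_{i+1}−1)^{b_{i+1}+1}, a_{i+2}^{b_{i+2}}, …, a_r^{b_r}) for 1 ≤ i ≤ r−1. Then the intersection (componentwise minimum) of all λ^1, …, λ^{r−1} equals λ^0 := (a_1^{b_1−1}, (a_2−1)^{b_2}, …, (a_{r−1}−1)^{b_{r−1}}, (a_r−1)^{b_r+1}). -/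
/-- The partition `(a_1^{b_1}, …, a_r^{b_r})` given by lists of part sizes `a`
and multiplicities `b`, as a function (0-indexed; zero beyond the last part). -/
def rectsP (a b : List ℕ) : ℕ → ℕ :=
  fun i => ((a.zip b).flatMap fun p => List.replicate p.2 p.1).getD i 0

/-- Removing the `i`-th boundary hook (0-indexed; this is the paper's `λ^{i+1}`). -/
def hookRemove (a b : List ℕ) (i : ℕ) : ℕ → ℕ :=
  rectsP (a.set (i + 1) (a.getD (i + 1) 0 - 1))
    ((b.set i (b.getD i 0 - 1)).set (i + 1) (b.getD (i + 1) 0 + 1))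

/-- `λ^0 = (a_1^{b_1−1}, (a_2−1)^{b_2}, …, (a_{r−1}−1)^{b_{r−1}}, (a_r−1)^{b_r+1})`. -/
def lamZero (a b : List ℕ) : ℕ → ℕ :=
  rectsP (a.headI :: (a.tail.map fun x => x - 1))
    ((b.set 0 (b.headI - 1)).set (b.length - 1) (b.getD (b.length - 1) 0 + 1))

/-!
Write `B_k` for the prefix sums of the multiplicities `b`, so that row `n` of `λ` lies in block `k`
(and has length `a_k`) when `B_k ≤ n < B_{k+1}`. Both `λ^0` and the hook removals arise from `λ`
by moving one unit of multiplicity from a block `p` to a later block `q` (`moveUnit`) and lowering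
some parts by one, so their prefix sums are those of `λ` lowered by one strictly after `p` and up
to `q`. If row `n` of `λ^0` lies in its block `j`, then row `n` of `hookRemove a b (j - 1)` lies in
its block `j` too and has the same length. For any `i`, row `n` of `hookRemove a b i` lies in a
block `k ≤ j`, so it has length at least `a_k - 1 ≥ a_j - 1` since the `a`'s decrease, and exactly
`a_0` when `j = 0`.
-/

namespace List

theorem sum_take_le_sum_take (l : List ℕ) {j k : ℕ} (h : j ≤ k) :
    (l.take j).sum ≤ (l.take k).sum :=
  (take_prefix_take_left h).sublist.sum_le_sum fun _ _ => Nat.zero_le _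

theorem SortedGE.getD_le_getD {l : List ℕ} (hl : l.SortedGE) {j k : ℕ} (hjk : j ≤ k) :
    l.getD k 0 ≤ l.getD j 0 := by
  rcases lt_or_ge k l.length with hk | hk
  · simp only [getD_eq_getElem _ _ hk, getD_eq_getElem _ _ (hjk.trans_lt hk)]
    exact hl.antitone_get (show (⟨j, by omega⟩ : Fin l.length) ≤ ⟨k, hk⟩ from hjk)
  · rw [getD_eq_default _ _ hk]; exact Nat.zero_le _

theorem getD_pos {l : List ℕ} (hl : ∀ x ∈ l, 0 < x) {k : ℕ} (hk : k < l.length) :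
    0 < l.getD k 0 := by
  rw [getD_eq_getElem _ _ hk]
  exact hl _ (getElem_mem _)

theorem getD_set_of_ne {α : Type*} {l : List α} {m k : ℕ} {x d : α} (h : k ≠ m) :
    (l.set m x).getD k d = l.getD k d := by
  simp [getD_eq_getElem?_getD, getElem?_set_ne (Ne.symm h)]

theorem getD_sub_one_le_getD_set (l : List ℕ) (m k : ℕ) :
    l.getD k 0 - 1 ≤ (l.set m (l.getD m 0 - 1)).getD k 0 := by
  rcases eq_or_ne k m with rfl | h
  · simp only [getD_eq_getElem?_getD, getElem?_set_self']
    cases l[k]? <;> simp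
  · rw [getD_set_of_ne h]; exact Nat.sub_le _ _

theorem sum_take_set_add {M : Type*} [AddCommMonoid M] :
    ∀ (l : List M) (i : ℕ) (x : M) (k : ℕ), i < l.length →
      ((l.set i x).take k).sum + (if i < k then l.getD i 0 else 0)
        = (l.take k).sum + (if i < k then x else 0)
  | [], _, _, _, h => by simp at h
  | _ :: _, _, _, 0, _ => by simp
  | y :: l, 0, x, k + 1, _ => by simp [add_comm, add_left_comm]
  | y :: l, i + 1, x, k + 1, h => by
    have := sum_take_set_add l i x k (by simpa using h)
    simp only [set_cons_succ, take_succ_cons, sum_cons, getD_cons_succ, add_lt_add_iff_right] at *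
    rw [add_assoc, this, add_assoc]

theorem exists_sum_take_le_lt (l : List ℕ) {n : ℕ} (hn : n < l.sum) :
    ∃ j < l.length, (l.take j).sum ≤ n ∧ n < (l.take (j + 1)).sum := by
  induction l generalizing n with
  | nil => simp at hn
  | cons y l ih =>
    rw [sum_cons] at hn
    by_cases hy : n < y
    · exact ⟨0, by simp, by simp, by simpa using hy⟩
    · obtain ⟨j, hj, h₁, h₂⟩ := ih (n := n - y) (by omega)
      exact ⟨j + 1, by simpa using hj, by simp; omega, by simp; omega⟩

end List

theorem rectsP_cons (x y : ℕ) (a b : List ℕ) (n : ℕ) :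
    rectsP (x :: a) (y :: b) n = if n < y then x else rectsP a b (n - y) := by
  simp only [rectsP, List.zip_cons_cons, List.flatMap_cons]
  split_ifs with h
  · rw [List.getD_append _ _ _ _ (by simpa using h)]
    simp [List.getD_eq_getElem?_getD, h]
  · rw [List.getD_append_right _ _ _ _ (by simp; omega)]
    simp

theorem rectsP_of_sum_le : ∀ (a b : List ℕ) {n : ℕ}, b.sum ≤ n → rectsP a b n = 0
  | [], _, _, _ => rfl
  | _ :: _, [], _, _ => by simp [rectsP]
  | x :: a, y :: b, n, h => by
    rw [List.sum_cons] at h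
    rw [rectsP_cons, if_neg (by omega)]
    exact rectsP_of_sum_le a b (by omega)

theorem rectsP_eq_getD : ∀ (a b : List ℕ) {j n : ℕ}, j < b.length →
    (b.take j).sum ≤ n → n < (b.take (j + 1)).sum → rectsP a b n = a.getD j 0
  | [], _, _, _, _, _, _ => by simp [rectsP]
  | x :: a, y :: b, 0, n, _, _, h => by
    rw [rectsP_cons, if_pos (by simpa using h)]
    rfl
  | x :: a, y :: b, j + 1, n, hj, h₁, h₂ => by
    simp only [List.take_succ_cons, List.sum_cons, List.length_cons] at hj h₁ h₂
    rw [rectsP_cons, if_neg (by omega)]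
    exact rectsP_eq_getD a b (by omega) (by omega) (by omega)

theorem exists_rectsP_eq_getD (a b : List ℕ) {n : ℕ} (hn : n < b.sum) :
    ∃ j < b.length, (b.take j).sum ≤ n ∧ n < (b.take (j + 1)).sum ∧
      rectsP a b n = a.getD j 0 := by
  obtain ⟨j, hj, h₁, h₂⟩ := b.exists_sum_take_le_lt hn
  exact ⟨j, hj, h₁, h₂, rectsP_eq_getD a b hj h₁ h₂⟩

def moveUnit (b : List ℕ) (p q : ℕ) : List ℕ :=
  (b.set p (b.getD p 0 - 1)).set q (b.getD q 0 + 1)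

theorem length_moveUnit (b : List ℕ) (p q : ℕ) : (moveUnit b p q).length = b.length := by
  simp [moveUnit]

theorem sum_take_moveUnit {b : List ℕ} {p q : ℕ} (hpq : p < q) (hq : q < b.length)
    (hp : 0 < b.getD p 0) (k : ℕ) :
    ((moveUnit b p q).take k).sum + (if p < k ∧ k ≤ q then 1 else 0) = (b.take k).sum := by
  have h₁ := List.sum_take_set_add b p (b.getD p 0 - 1) k (by omega)
  have h₂ := List.sum_take_set_add (b.set p (b.getD p 0 - 1)) q (b.getD q 0 + 1) k
    (by simp; omega)
  have hq' : (b.set p (b.getD p 0 - 1)).getD q 0 = b.getD q 0 := by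
    simp [List.getD_eq_getElem?_getD, List.getElem?_set_ne hpq.ne]
  rw [hq'] at h₂
  rw [moveUnit]
  split_ifs at h₁ h₂ ⊢ <;> omega

theorem sum_moveUnit {b : List ℕ} {p q : ℕ} (hpq : p < q) (hq : q < b.length)
    (hp : 0 < b.getD p 0) : (moveUnit b p q).sum = b.sum := by
  have := sum_take_moveUnit hpq hq hp b.length
  rw [if_neg (by omega), List.take_of_length_le le_rfl,
    List.take_of_length_le (by rw [length_moveUnit])] at this
  simpa using this

theorem getD_headI_cons_map_sub_one (a : List ℕ) (k : ℕ) :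
    (a.headI :: a.tail.map fun x => x - 1).getD k 0 =
      if k = 0 then a.getD 0 0 else a.getD k 0 - 1 := by
  rcases a with _ | ⟨x, a⟩ <;> rcases k with _ | k <;> simp [List.getD_eq_getElem?_getD]
  cases a[k]? <;> rfl

theorem hookRemove_eq_rectsP (a b : List ℕ) (i : ℕ) :
    hookRemove a b i = rectsP (a.set (i + 1) (a.getD (i + 1) 0 - 1)) (moveUnit b i (i + 1)) :=
  rfl

theorem lamZero_eq_rectsP (a b : List ℕ) :
    lamZero a b =
      rectsP (a.headI :: a.tail.map fun x => x - 1) (moveUnit b 0 (b.length - 1)) := by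
  cases b <;> rfl

section HookRemoval

variable {a b : List ℕ}

theorem lamZero_le_hookRemove (ha : a.SortedGE) (hbp : ∀ x ∈ b, 0 < x) {i : ℕ}
    (hi : i + 1 < b.length) (n : ℕ) : lamZero a b n ≤ hookRemove a b i n := by
  have hb₀ : 0 < b.getD 0 0 := List.getD_pos hbp (by omega)
  have hbi : 0 < b.getD i 0 := List.getD_pos hbp (by omega)
  have hsum₀ : (moveUnit b 0 (b.length - 1)).sum = b.sum :=
    sum_moveUnit (by omega) (by omega) hb₀
  have hsum : (moveUnit b i (i + 1)).sum = b.sum := sum_moveUnit (by omega) hi hbi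
  rw [lamZero_eq_rectsP, hookRemove_eq_rectsP]
  rcases lt_or_ge n b.sum with hn | hn
  swap
  · rw [rectsP_of_sum_le _ _ (by omega)]; exact Nat.zero_le _
  obtain ⟨j, hj, hj₁, hj₂, hz⟩ := exists_rectsP_eq_getD
    (a.headI :: a.tail.map fun x => x - 1) (moveUnit b 0 (b.length - 1)) (n := n) (by omega)
  obtain ⟨k, hk, hk₁, hk₂, hh⟩ := exists_rectsP_eq_getD
    (a.set (i + 1) (a.getD (i + 1) 0 - 1)) (moveUnit b i (i + 1)) (n := n) (by omega)
  rw [length_moveUnit] at hj hk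
  have hkj : k ≤ j := by
    by_contra! hjk
    have e₁ := sum_take_moveUnit (p := 0) (q := b.length - 1) (by omega) (by omega) hb₀ (j + 1)
    have e₂ := sum_take_moveUnit (by omega) hi hbi (j + 1)
    have := List.sum_take_le_sum_take (moveUnit b i (i + 1)) (show j + 1 ≤ k by omega)
    split_ifs at e₁ e₂ <;> omega
  rw [hz, hh, getD_headI_cons_map_sub_one]
  rcases Nat.eq_zero_or_pos j with rfl | hj₀
  · obtain rfl : k = 0 := by omega
    rw [if_pos rfl, List.getD_set_of_ne (by omega)]
  · rw [if_neg hj₀.ne']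
    exact (Nat.sub_le_sub_right (ha.getD_le_getD hkj) 1).trans
      (List.getD_sub_one_le_getD_set _ _ _)

theorem exists_hookRemove_eq_lamZero (ha : a.length = b.length) (hbp : ∀ x ∈ b, 0 < x)
    (hb : 2 ≤ b.length) (n : ℕ) : ∃ i < b.length - 1, hookRemove a b i n = lamZero a b n := by
  have hb₀ : 0 < b.getD 0 0 := List.getD_pos hbp (by omega)
  have hsum₀ : (moveUnit b 0 (b.length - 1)).sum = b.sum :=
    sum_moveUnit (by omega) (by omega) hb₀
  rw [lamZero_eq_rectsP]
  rcases lt_or_ge n b.sum with hn | hn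
  swap
  · refine ⟨0, by omega, ?_⟩
    have hsum : (moveUnit b 0 (0 + 1)).sum = b.sum := sum_moveUnit (by omega) (by omega) hb₀
    rw [hookRemove_eq_rectsP, rectsP_of_sum_le _ _ (by omega), rectsP_of_sum_le _ _ (by omega)]
  obtain ⟨j, hj, hj₁, hj₂, hz⟩ := exists_rectsP_eq_getD
    (a.headI :: a.tail.map fun x => x - 1) (moveUnit b 0 (b.length - 1)) (n := n) (by omega)
  rw [length_moveUnit] at hj
  -- for `j = 0` the witness `j - 1` is `0`: both lists then start with `b_0 - 1` rows `a_0`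
  refine ⟨j - 1, by omega, ?_⟩
  have e₁ := sum_take_moveUnit (p := 0) (q := b.length - 1) (by omega) (by omega) hb₀
  have e₂ := sum_take_moveUnit (p := j - 1) (q := j - 1 + 1) (by omega) (by omega)
    (List.getD_pos hbp (show j - 1 < b.length by omega))
  have h₁ := e₁ j; have h₂ := e₁ (j + 1); have h₃ := e₂ j; have h₄ := e₂ (j + 1)
  rw [hz, hookRemove_eq_rectsP, rectsP_eq_getD _ _ (j := j) (by rw [length_moveUnit]; omega)
    (by split_ifs at h₁ h₃ <;> omega) (by split_ifs at h₂ h₄ <;> omega),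
    getD_headI_cons_map_sub_one]
  rcases Nat.eq_zero_or_pos j with rfl | hj₀
  · exact List.getD_set_of_ne (by omega)
  · rw [if_neg hj₀.ne', Nat.sub_add_cancel hj₀]
    simp [List.getD_eq_getElem?_getD, List.getElem?_set_self (show j < a.length by omega)]

end HookRemoval

/-- for a canonical `λ = (a_1^{b_1},…,a_r^{b_r})` with `r ≥ 2`, the
componentwise minimum (intersection) of the hook removals `λ^1, …, λ^{r−1}`
equals `λ^0`. -/
theorem inf_hookRemove_eq_lamZero (r : ℕ) (a b : List ℕ) (hr : 2 ≤ r)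
    (ha : a.length = r) (hb : b.length = r) (hch : a.Chain' (· > ·))
    (hbp : ∀ x ∈ b, 0 < x) :
    ∀ n, ((Finset.range (r - 1)).inf'
        (Finset.nonempty_range_iff.mpr (by omega))
        fun i => hookRemove a b i n) = lamZero a b n := by
  subst hb
  intro n
  have hsorted : a.SortedGE := (hch.imp fun _ _ => le_of_lt).sortedGE
  obtain ⟨i, hi, h⟩ := exists_hookRemove_eq_lamZero ha hbp hr n
  refine le_antisymm ((Finset.inf'_le _ (Finset.mem_range.2 hi)).trans h.le) ?_
  exact Finset.le_inf' _ _ fun i hi => lamZero_le_hookRemove hsorted hbp (by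
    rw [Finset.mem_range] at hi; omega) n
end
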